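/- arXiv:1410.7693 — 3 statements merged into one kernel-verified Lean document; each statement's English description precedes it below -/
import Mathlib

section
/- Let β ∈ B, R a region of β3-length N, and 0 < ε < 1/N. For any two segments ℓ0, ℓ1 of R, τ^{β3}(ℓ0,ℓ1) = (1/4) Σ_{i,j∈{−1,1}} τ^β_{iε,jε}(ℓ0,ℓ1), i.e., the orthogonal effect is the average of the four slanted effects. -/
open scoped BigOperators
noncomputable section

/-- Points of `ℝ³`. -/
abbrev R3 := Fin 3 → ℝ

/-- Euclidean inner product on `ℝ³`. -/
def dot (x y : R3) : ℝ := ∑ i, x i * y i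

/-- Determinant of the 3×3 matrix with rows `a`, `b`, `c`. -/
def det3 (a b c : R3) : ℝ := Matrix.det (Matrix.of ![a, b, c])

/-- The canonical basis vectors of `ℝ³`. -/
def stdR (i : Fin 3) : R3 := fun j => if j = i then 1 else 0

/-- `Φ`, the set of signed canonical basis vectors. -/
def PhiR : Set R3 := {u | ∃ i : Fin 3, u = stdR i ∨ u = -stdR i}

/-- A positively oriented basis with vectors in `Φ`. -/
def IsLatticeBasis (b1 b2 b3 : R3) : Prop :=
  b1 ∈ PhiR ∧ b2 ∈ PhiR ∧ b3 ∈ PhiR ∧ det3 b1 b2 b3 = 1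

/-- The basic (closed unit) cube with least corner `q ∈ ℤ³`. -/
def cubeSet (q : Fin 3 → ℤ) : Set R3 := {x | ∀ i, (q i : ℝ) ≤ x i ∧ x i ≤ q i + 1}

/-- The center of the basic cube with corner `q`. -/
def cubeCenter (q : Fin 3 → ℤ) : R3 := fun i => (q i : ℝ) + 1/2

/-- A basic cube is black when the coordinate sum of its corner is odd. -/
def cubeBlack (q : Fin 3 → ℤ) : Prop := Odd (q 0 + q 1 + q 2)

instance : DecidablePred cubeBlack := fun q => by unfold cubeBlack; infer_instance

/-- Color of a basic cube: `1` for black, `-1` for white. -/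
def col (q : Fin 3 → ℤ) : ℤ := if cubeBlack q then 1 else -1

/-- A region, given as a finite set of basic cubes (identified by corners),
realized as a subset of `ℝ³`. -/
def regionSet (R : Finset (Fin 3 → ℤ)) : Set R3 := ⋃ q ∈ R, cubeSet q

/-- A domino brick: two basic cubes sharing a face. -/
structure Domino where
  c1 : Fin 3 → ℤ
  c2 : Fin 3 → ℤ
  adj : (∑ i, |c1 i - c2 i|) = 1

instance : DecidableEq Domino := fun d e =>
  decidable_of_iff (d.c1 = e.c1 ∧ d.c2 = e.c2) (by cases d; cases e; simp)

/-- The two cubes of a domino. -/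
def Domino.cubes (d : Domino) : Finset (Fin 3 → ℤ) := {d.c1, d.c2}

/-- The domino as a subset of `ℝ³`. -/
def Domino.toSet (d : Domino) : Set R3 := cubeSet d.c1 ∪ cubeSet d.c2

/-- `v(d)`: the center of the black cube minus the center of the white cube. -/
def Domino.v (d : Domino) : R3 :=
  if cubeBlack d.c1 then (fun i => (d.c1 i : ℝ) - d.c2 i) else (fun i => (d.c2 i : ℝ) - d.c1 i)

/-- Two dominoes are the same up to the (irrelevant) ordering of their cubes. -/
def Domino.same (d e : Domino) : Prop :=
  (d.c1 = e.c1 ∧ d.c2 = e.c2) ∨ (d.c1 = e.c2 ∧ d.c2 = e.c1)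

/-- The open `u`-shade of a set `X ⊆ ℝ³`. -/
def shade (u : R3) (X : Set R3) : Set R3 :=
  interior ({y | ∃ x ∈ X, ∃ s : ℝ, 0 ≤ s ∧ y = x + s • u} \ X)

/-- The effect of the domino `d0` on the domino `d1` along `u`. -/
def tau (u : R3) (d0 d1 : Domino) : ℝ :=
  open scoped Classical in
  if (d1.toSet ∩ shade u d0.toSet).Nonempty then (1/4) * det3 d1.v d0.v u else 0

/-- The `u`-pretwist of a (finite set of) dominoes. -/
def T (u : R3) (t : Finset Domino) : ℝ := ∑ d0 ∈ t, ∑ d1 ∈ t, tau u d0 d1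

/-- `t` is a tiling of the region `R`: every domino lies in `R` and every cube
of `R` is covered by exactly one domino of `t`. -/
def IsTiling (R : Finset (Fin 3 → ℤ)) (t : Finset Domino) : Prop :=
  (∀ d ∈ t, d.c1 ∈ R ∧ d.c2 ∈ R) ∧
  ∀ q ∈ R, ∃! d, d ∈ t ∧ (q = d.c1 ∨ q = d.c2)

/-- Translation of a domino by an integer vector. -/
def Domino.translate (d : Domino) (b : Fin 3 → ℤ) : Domino :=
  ⟨fun i => d.c1 i + b i, fun i => d.c2 i + b i, by
    have h : ∀ i : Fin 3, |d.c1 i + b i - (d.c2 i + b i)| = |d.c1 i - d.c2 i| := by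
      intro i; ring_nf
    rw [Finset.sum_congr rfl fun i _ => h i]; exact d.adj⟩

/-- Reflection of a cube in the hyperplane `x_k = 0`. -/
def reflCube (k : Fin 3) (q : Fin 3 → ℤ) : Fin 3 → ℤ :=
  fun i => if i = k then -q i - 1 else q i

/-- Reflection of a domino in the hyperplane `x_k = 0`. -/
def Domino.reflect (d : Domino) (k : Fin 3) : Domino :=
  ⟨reflCube k d.c1, reflCube k d.c2, by
    have h : ∀ i : Fin 3, |reflCube k d.c1 i - reflCube k d.c2 i| = |d.c1 i - d.c2 i| := by
      intro i
      by_cases hik : i = k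
      · simp only [reflCube, if_pos hik]
        have h2 : -d.c1 i - 1 - (-d.c2 i - 1) = -(d.c1 i - d.c2 i) := by ring
        rw [h2, abs_neg]
      · simp [reflCube, hik]
    rw [Finset.sum_congr rfl fun i _ => h i]; exact d.adj⟩

/-- A signed-permutation rotation applied to a basic cube (acting on centers by
`y i = ε i * x (σ i)` and recording the new least corner). -/
def rotCube (σ : Equiv.Perm (Fin 3)) (ε : Fin 3 → ℤ) (q : Fin 3 → ℤ) : Fin 3 → ℤ :=
  fun i => if ε i = 1 then q (σ i) else -q (σ i) - 1

/-- A signed-permutation rotation applied to a domino. -/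
def Domino.rot (d : Domino) (σ : Equiv.Perm (Fin 3)) (ε : Fin 3 → ℤ) : Domino :=
  ⟨rotCube σ ε d.c1, rotCube σ ε d.c2, by
    have h : ∀ i : Fin 3, |rotCube σ ε d.c1 i - rotCube σ ε d.c2 i|
        = |d.c1 (σ i) - d.c2 (σ i)| := by
      intro i
      by_cases hi : ε i = 1
      · simp [rotCube, hi]
      · simp only [rotCube, if_neg hi]
        have h2 : -d.c1 (σ i) - 1 - (-d.c2 (σ i) - 1) = -(d.c1 (σ i) - d.c2 (σ i)) := by ring
        rw [h2, abs_neg]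
    rw [Finset.sum_congr rfl fun i _ => h i]
    rw [Equiv.sum_comp σ (fun j => |d.c1 j - d.c2 j|)]
    exact d.adj⟩

/-- Auxiliary constructor for dominoes. -/
def mkDom (p q : Fin 3 → ℤ) (h : (∑ i, |p i - q i|) = 1) : Domino := ⟨p, q, h⟩

/-- The three dominoes removed by the canonical positive trit. -/
def tritPre : Fin 3 → Domino
  | 0 => mkDom ![0,0,0] ![0,0,1] (by decide)
  | 1 => mkDom ![0,1,1] ![1,1,1] (by decide)
  | 2 => mkDom ![1,0,0] ![1,1,0] (by decide)

/-- The three dominoes placed back by the canonical positive trit. -/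
def tritPost : Fin 3 → Domino
  | 0 => mkDom ![0,0,0] ![1,0,0] (by decide)
  | 1 => mkDom ![0,0,1] ![0,1,1] (by decide)
  | 2 => mkDom ![1,1,0] ![1,1,1] (by decide)

/-- `t1` is obtained from `t0` by a flip: two dominoes of `t0` occupying a
`2×2×1` slab are replaced by the two other dominoes filling the same slab. -/
def IsFlip (t0 t1 : Finset Domino) : Prop :=
  ∃ d0 d0' d1 d1' : Domino, d0 ∈ t0 ∧ d0' ∈ t0 ∧ d0 ≠ d0' ∧
    d1 ∈ t1 ∧ d1' ∈ t1 ∧ d1 ≠ d1' ∧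
    t0 \ {d0, d0'} = t1 \ {d1, d1'} ∧
    ({d0, d0'} : Finset Domino) ≠ {d1, d1'} ∧
    d0.cubes ∪ d0'.cubes = d1.cubes ∪ d1'.cubes

/-- `t1` is obtained from `t0` by a positive trit: up to an orientation preserving
lattice isometry, three dominoes of `t0` in the canonical pre-trit position are
replaced by the three dominoes in the canonical post-trit position. -/
def IsPositiveTrit (t0 t1 : Finset Domino) : Prop :=
  ∃ (σ : Equiv.Perm (Fin 3)) (ε : Fin 3 → ℤ) (b : Fin 3 → ℤ),
    (∀ i, ε i = 1 ∨ ε i = -1) ∧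
    ((∏ i, ε i) : ℤ) * (Equiv.Perm.sign σ : ℤ) = 1 ∧
    ∃ a : Fin 3 → Domino, ∃ a' : Fin 3 → Domino,
      (∀ j, a j ∈ t0) ∧ (∀ j, a' j ∈ t1) ∧
      (∀ j, (a j).same (((tritPre j).rot σ ε).translate b)) ∧
      (∀ j, (a' j).same (((tritPost j).rot σ ε).translate b)) ∧
      t0 \ {a 0, a 1, a 2} = t1 \ {a' 0, a' 1, a' 2}

/-- A cube `q` lies in the closed shade, in the direction `±e_k` (sign `sgn`),
of the 2×2 square with normal `e_k` and corner `p` (at height `p k`). -/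
def inShade (k : Fin 3) (sgn : Bool) (p q : Fin 3 → ℤ) : Prop :=
  (∀ j, j ≠ k → q j = p j ∨ q j = p j + 1) ∧ (if sgn then p k ≤ q k else q k < p k)

instance (k : Fin 3) (sgn : Bool) (p q : Fin 3 → ℤ) : Decidable (inShade k sgn p q) := by
  unfold inShade; infer_instance

/-- The 2×2 square with normal `e_k`, corner `p`, at height `p k`
is contained in the region `R`. -/
def squareInRegion (R : Finset (Fin 3 → ℤ)) (k : Fin 3) (p : Fin 3 → ℤ) : Prop :=
  ∀ q : Fin 3 → ℤ, (∀ j, j ≠ k → q j = p j ∨ q j = p j + 1) → q k = p k →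
    q ∈ R ∨ Function.update q k (p k - 1) ∈ R

/-- `R` is fully balanced with respect to the directions `±e_k`. -/
def FullyBalancedWrt (R : Finset (Fin 3 → ℤ)) (k : Fin 3) : Prop :=
  ∀ p : Fin 3 → ℤ, squareInRegion R k p →
    (∑ q ∈ R, if inShade k true p q then col q else 0) = 0 ∧
    (∑ q ∈ R, if inShade k false p q then col q else 0) = 0

/-- `R` is a pseudocylinder with axis `e_k` and depth `n`: a planar region with
connected interior, thickened `n` layers in the direction `e_k`. -/
def IsPseudocylinder (R : Finset (Fin 3 → ℤ)) (k : Fin 3) (n : ℕ) : Prop :=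
  0 < n ∧
  (∀ q ∈ R, 0 ≤ q k ∧ q k < n) ∧
  (∀ q ∈ R, ∀ m : ℤ, 0 ≤ m → m < n → Function.update q k m ∈ R) ∧
  R.Nonempty ∧
  IsConnected (interior (regionSet (R.filter (fun q => q k = 0))))

/-- A cylinder: a pseudocylinder whose base is simply connected. -/
def IsCylinder (R : Finset (Fin 3 → ℤ)) (k : Fin 3) (n : ℕ) : Prop :=
  IsPseudocylinder R k n ∧
  SimplyConnectedSpace (interior (regionSet (R.filter (fun q => q k = 0))))

/-- A (lattice) segment: the unit straight path between the centers of two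
face-adjacent basic cubes, from the center of the cube `a` to that of `b`. -/
structure Seg where
  a : Fin 3 → ℤ
  b : Fin 3 → ℤ
  adj : (∑ i, |a i - b i|) = 1

/-- The point of a segment at parameter `x ∈ [0,1]`. -/
def Seg.pt (s : Seg) (x : ℝ) : R3 := fun i => (cubeCenter s.a i) + x * ((s.b i : ℝ) - s.a i)

/-- The direction `v(ℓ) = ℓ(1) - ℓ(0)` of a segment. -/
def Seg.vec (s : Seg) : R3 := fun i => (s.b i : ℝ) - s.a i

/-- A segment lies in a region if both its cubes do. -/
def Seg.inRegion (s : Seg) (R : Finset (Fin 3 → ℤ)) : Prop := s.a ∈ R ∧ s.b ∈ R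

/-- A straight segment in `ℝ³`, with base point `p` and direction `v`. -/
structure RSeg where
  p : R3
  v : R3

/-- The point of an `RSeg` at parameter `x ∈ [0,1]`. -/
def RSeg.pt (l : RSeg) (x : ℝ) : R3 := fun i => l.p i + x * l.v i

/-- Orientation reversal of an `RSeg`. -/
def RSeg.reverse (l : RSeg) : RSeg := ⟨fun i => l.p i + l.v i, fun i => -l.v i⟩

/-- Translation of an `RSeg`. -/
def RSeg.translate (l : RSeg) (u : R3) : RSeg := ⟨fun i => l.p i + u i, l.v⟩

/-- The `RSeg` underlying a lattice segment. -/
def Seg.toR (s : Seg) : RSeg := ⟨cubeCenter s.a, s.vec⟩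

/-- The dimer of a domino: the segment from the white center to the black center. -/
def Domino.dimer (d : Domino) : RSeg :=
  if cubeBlack d.c1 then ⟨cubeCenter d.c2, d.v⟩ else ⟨cubeCenter d.c1, d.v⟩

/-- The orthogonal projection onto the plane `u^⊥`. -/
def projO (u : R3) (x : R3) : R3 := fun i => x i - (dot x u) * u i

/-- The (slanted) projection onto `b3^⊥` with kernel spanned by `b3 + a·b1 + b·b2`. -/
def projSl (b1 b2 b3 : R3) (a b : ℝ) (x : R3) : R3 :=
  fun i => x i - (dot x b3) * (b3 i + a * b1 i + b * b2 i)

/-- The effect of segment `l0` on segment `l1` along `u` (orthogonal version). -/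
def tauR (u : R3) (l0 l1 : RSeg) : ℝ :=
  open scoped Classical in
  if ((∃ x0 ∈ Set.Icc (0:ℝ) 1, ∃ x1 ∈ Set.Icc (0:ℝ) 1,
        projO u (l0.pt x0) = projO u (l1.pt x1)) ∧ dot (l0.pt 0) u < dot (l1.pt 0) u)
  then (1/4) * det3 l1.v l0.v u else 0

/-- The slanted effect `τ^β_{a,b}(l0,l1)`. -/
def tauSl (b1 b2 b3 : R3) (a b : ℝ) (l0 l1 : RSeg) : ℝ :=
  open scoped Classical in
  if ((∃ x0 ∈ Set.Icc (0:ℝ) 1, ∃ x1 ∈ Set.Icc (0:ℝ) 1,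
        projSl b1 b2 b3 a b (l0.pt x0) = projSl b1 b2 b3 a b (l1.pt x1))
      ∧ dot (l0.pt 0) b3 < dot (l1.pt 0) b3)
  then det3 l1.v l0.v b3 else 0

/-- `T^u(A,B)` summed over two finite families of segments. -/
def Tfam {n m : ℕ} (u : R3) (A : Fin n → RSeg) (B : Fin m → RSeg) : ℝ :=
  ∑ k, ∑ l, tauR u (A k) (B l)

/-- The combinatorial linking number (along `u`) of two disjoint closed curves:
half the symmetrized sum of effects. -/
def LinkAlong {n m : ℕ} (u : R3) (A : Fin n → RSeg) (B : Fin m → RSeg) : ℝ :=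
  (Tfam u A B + Tfam u B A) / 2

/-- The `u`-pretwist of a tiling, computed via dimers. -/
def Tdim (u : R3) (t : Finset Domino) : ℝ := ∑ d0 ∈ t, ∑ d1 ∈ t, tauR u d0.dimer d1.dimer

/-- A closed curve given by a cyclic list of segments. -/
def IsClosedCurve {n : ℕ} (γ : Fin n → RSeg) : Prop :=
  2 ≤ n ∧ ∀ k : Fin n,
    (γ k).pt 1 = (γ ⟨(k.val + 1) % n, Nat.mod_lt _ k.pos⟩).pt 0

/-- A closed curve is simple when its vertices are pairwise distinct. -/
def IsSimpleCurve {n : ℕ} (γ : Fin n → RSeg) : Prop :=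
  Function.Injective (fun k : Fin n => (γ k).pt 0)

/-- The (cyclically) next segment of a curve. -/
def nextSeg {n : ℕ} (hn : 0 < n) (γ : Fin n → RSeg) (k : Fin n) : RSeg :=
  γ ⟨(k.val + 1) % n, Nat.mod_lt _ hn⟩

/-- Adjacency of basic cubes. -/
def cubeAdj (p q : Fin 3 → ℤ) : Prop := (∑ i, |p i - q i|) = 1

/-- The associated graph of a region: vertices are cubes, edges join
face-adjacent cubes. -/
def cubeGraph (R : Finset (Fin 3 → ℤ)) : SimpleGraph {q // q ∈ R} where
  Adj p q := cubeAdj p.val q.val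
  symm := by
    constructor
    intro p q h
    unfold cubeAdj at h ⊢
    rw [Finset.sum_congr rfl fun i _ => abs_sub_comm (q.val i) (p.val i)]
    exact h
  loopless := by constructor; intro p h; simp [cubeAdj] at h

/-- The prism `G × I_m` over a graph `G`: the product of `G` with a path. -/
def prism {V : Type*} (G : SimpleGraph V) (m : ℕ) : SimpleGraph (V × Fin m) where
  Adj a b := (a.1 = b.1 ∧ (a.2.val + 1 = b.2.val ∨ b.2.val + 1 = a.2.val))
    ∨ (G.Adj a.1 b.1 ∧ a.2 = b.2)
  symm := by
    constructor
    intro a b h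
    rcases h with ⟨h1, h2⟩ | ⟨h1, h2⟩
    · exact Or.inl ⟨h1.symm, h2.symm⟩
    · exact Or.inr ⟨h1.symm, h2.symm⟩
  loopless := by
    constructor
    intro a h
    rcases h with ⟨-, h2⟩ | ⟨h1, -⟩
    · omega
    · exact G.loopless.irrefl _ h1

/-- The turning indicator `η` of a curve at position `k`. -/
def eta {n : ℕ} (b2 b3 : R3) (γ : Fin n → RSeg) (k : Fin n) : ℝ :=
  open scoped Classical in
  if ((γ k).v = b2 ∧ (nextSeg k.pos γ k).v = b3)
      ∨ ((γ k).v = -b3 ∧ (nextSeg k.pos γ k).v = -b2) then 1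
  else if ((γ k).v = -b2 ∧ (nextSeg k.pos γ k).v = -b3)
      ∨ ((γ k).v = b3 ∧ (nextSeg k.pos γ k).v = b2) then -1
  else 0

/-- A box: a rectangular parallelepiped of basic cubes. -/
def IsBox (B : Finset (Fin 3 → ℤ)) : Prop :=
  ∃ lo hi : Fin 3 → ℤ, (∀ i, lo i < hi i) ∧ ∀ q, q ∈ B ↔ ∀ i, lo i ≤ q i ∧ q i < hi i

/-! The basis `β` is a signed permutation of the coordinate frame and both segments are unit
lattice steps. All five effects vanish unless `v(ℓ₁)`, `v(ℓ₀)`, `β₃` are mutually orthogonal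
and `ℓ₁` starts `h > 0` levels above `ℓ₀` along `β₃`; then `h ≤ N`, so `δ = εh ∈ (0, 1)`.
In the coordinates along `β₁, β₂`, the projections of `ℓ₀, ℓ₁` along `β₃ + aβ₁ + bβ₂` meet iff
`(a h, b h)` lies in a unit square `[n₁, n₁ + 1] × [n₂, n₂ + 1]` with integer corners. An integer
unit interval contains `0` iff it contains exactly one of `±δ`, so the indicator of `(0, 0)`
is the sum of the indicators of the four points `(±δ, ±δ)`; and the orthogonal projection is
the slanted one with `a = b = 0`. -/

open Set

lemma dot_single (x : R3) (k : Fin 3) (s : ℝ) : dot x (Pi.single k s) = x k * s :=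
  dotProduct_single x s k

lemma Fin.three_cases_of_ne {a b c : Fin 3} (hab : a ≠ b) (hac : a ≠ c) (hbc : b ≠ c)
    (d : Fin 3) : d = a ∨ d = b ∨ d = c := by
  revert a b c d; decide

lemma exists_eq_single_of_mem_PhiR {u : R3} (hu : u ∈ PhiR) :
    ∃ k, ∃ s : ℤ, IsUnit s ∧ u = Pi.single k (s : ℝ) := by
  obtain ⟨k, rfl | rfl⟩ := hu
  · exact ⟨k, 1, isUnit_one, by ext j; simp [stdR, Pi.single_apply]⟩
  · exact ⟨k, -1, isUnit_one.neg, by ext j; simp [stdR, Pi.single_apply, apply_ite]⟩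

lemma det3_single_eq_zero {i j k : Fin 3} (h : i = j ∨ i = k ∨ j = k) (a b c : ℝ) :
    det3 (Pi.single i a) (Pi.single j b) (Pi.single k c) = 0 := by
  simp only [det3, Matrix.det_fin_three, Matrix.of_apply, Matrix.cons_val_zero,
    Matrix.cons_val_one, Matrix.cons_val_two, Matrix.head_cons, Matrix.tail_cons]
  fin_cases i <;> fin_cases j <;> fin_cases k <;> simp_all

lemma IsLatticeBasis.exists_eq_single {b1 b2 b3 : R3} (hβ : IsLatticeBasis b1 b2 b3) :
    ∃ k1 k2 k3 : Fin 3, k1 ≠ k2 ∧ k1 ≠ k3 ∧ k2 ≠ k3 ∧ ∃ s1 s2 s3 : ℤ,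
      IsUnit s1 ∧ IsUnit s2 ∧ IsUnit s3 ∧ b1 = Pi.single k1 (s1 : ℝ) ∧
        b2 = Pi.single k2 (s2 : ℝ) ∧ b3 = Pi.single k3 (s3 : ℝ) := by
  obtain ⟨hb1, hb2, hb3, hdet⟩ := hβ
  obtain ⟨k1, s1, hs1, rfl⟩ := exists_eq_single_of_mem_PhiR hb1
  obtain ⟨k2, s2, hs2, rfl⟩ := exists_eq_single_of_mem_PhiR hb2
  obtain ⟨k3, s3, hs3, rfl⟩ := exists_eq_single_of_mem_PhiR hb3
  have hk : ¬(k1 = k2 ∨ k1 = k3 ∨ k2 = k3) := fun h => by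
    simp [det3_single_eq_zero h] at hdet
  simp only [not_or] at hk
  exact ⟨k1, k2, k3, hk.1, hk.2.1, hk.2.2, s1, s2, s3, hs1, hs2, hs3, rfl, rfl, rfl⟩

lemma exists_eq_single_of_sum_abs_eq_one {ι : Type*} [Fintype ι] [DecidableEq ι] (d : ι → ℤ)
    (h : ∑ i, |d i| = 1) : ∃ m, ∃ σ : ℤ, IsUnit σ ∧ d = Pi.single m σ := by
  obtain ⟨m, hm⟩ : ∃ m, d m ≠ 0 := by
    by_contra! h0
    simp [h0] at h
  have hsplit := Finset.add_sum_erase Finset.univ (fun i => |d i|) (Finset.mem_univ m)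
  have hrest : 0 ≤ ∑ i ∈ Finset.univ.erase m, |d i| := Finset.sum_nonneg fun i _ => abs_nonneg _
  have hdm : 1 ≤ |d m| := Int.one_le_abs hm
  have hzero : ∀ i ∈ Finset.univ.erase m, |d i| = 0 :=
    (Finset.sum_eq_zero_iff_of_nonneg fun i _ => abs_nonneg _).1 (by omega)
  refine ⟨m, d m, Int.isUnit_iff_abs_eq.2 (by omega), funext fun i => ?_⟩
  by_cases hi : i = m
  · subst hi; simp
  · simpa [hi] using hzero i (by simp [hi])

lemma Seg.exists_vec_eq_single (l : Seg) :
    ∃ m, ∃ σ : ℤ, IsUnit σ ∧ l.vec = Pi.single m (σ : ℝ) := by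
  obtain ⟨m, σ, hσ, hd⟩ := exists_eq_single_of_sum_abs_eq_one (l.b - l.a)
    (by simpa only [Pi.sub_apply, abs_sub_comm] using l.adj)
  refine ⟨m, σ, hσ, funext fun j => ?_⟩
  have hj := congrFun hd j
  simp only [Pi.sub_apply] at hj
  simp only [Seg.vec, ← Int.cast_sub, hj]
  exact Pi.apply_single (fun _ (x : ℤ) => (x : ℝ)) (fun _ => Int.cast_zero) m σ j

lemma Seg.toR_pt (l : Seg) (x : ℝ) (j : Fin 3) :
    l.toR.pt x j = l.a j + 1 / 2 + x * l.vec j := rfl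

lemma Seg.toR_pt_zero (l : Seg) : l.toR.pt 0 = cubeCenter l.a := by
  ext j
  simp [Seg.toR_pt, cubeCenter]

lemma dot_cubeCenter_sub_dot_cubeCenter (p q : Fin 3 → ℤ) (k : Fin 3) (s : ℤ) :
    dot (cubeCenter p) (Pi.single k (s : ℝ)) - dot (cubeCenter q) (Pi.single k (s : ℝ)) =
      ((p k - q k) * s : ℤ) := by
  simp only [dot_single, cubeCenter]
  push_cast
  ring

lemma projSl_single_eq_iff {k1 k2 k3 : Fin 3} (h12 : k1 ≠ k2) (h13 : k1 ≠ k3) (h23 : k2 ≠ k3)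
    {s1 s2 s3 : ℝ} (hs1 : s1 * s1 = 1) (hs2 : s2 * s2 = 1) (hs3 : s3 * s3 = 1)
    (a b : ℝ) (p q : R3) :
    projSl (Pi.single k1 s1) (Pi.single k2 s2) (Pi.single k3 s3) a b p =
        projSl (Pi.single k1 s1) (Pi.single k2 s2) (Pi.single k3 s3) a b q ↔
      (q k1 - p k1) * s1 = a * ((q k3 - p k3) * s3) ∧
        (q k2 - p k2) * s2 = b * ((q k3 - p k3) * s3) := by
  have hcoord (j : Fin 3) (x : R3) :
      projSl (Pi.single k1 s1) (Pi.single k2 s2) (Pi.single k3 s3) a b x j =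
        x j - x k3 * s3 * ((Pi.single k3 s3 : R3) j + a * (Pi.single k1 s1 : R3) j +
          b * (Pi.single k2 s2 : R3) j) := by
    rw [projSl, dot_single]
  rw [funext_iff]
  constructor
  · intro h
    have e1 := h k1
    have e2 := h k2
    simp only [hcoord, ne_eq, h12, h13, h23, h12.symm, not_false_eq_true, Pi.single_eq_of_ne,
      Pi.single_eq_same, mul_zero, add_zero, zero_add] at e1 e2
    constructor
    · linear_combination (-s1) * e1 + a * s3 * (q k3 - p k3) * hs1
    · linear_combination (-s2) * e2 + b * s3 * (q k3 - p k3) * hs2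
  · rintro ⟨e1, e2⟩ j
    rcases Fin.three_cases_of_ne h12 h13 h23 j with rfl | rfl | rfl <;>
      simp only [hcoord, ne_eq, h12, h13, h23, h12.symm, h13.symm, h23.symm, not_false_eq_true,
        Pi.single_eq_of_ne, Pi.single_eq_same, mul_zero, add_zero, zero_add]
    · linear_combination (-s1) * e1 + (q j - p j) * hs1
    · linear_combination (-s2) * e2 + (q j - p j) * hs2
    · linear_combination (q j - p j) * hs3

def SlantedProjMeet (b1 b2 b3 : R3) (a b : ℝ) (l0 l1 : RSeg) : Prop :=
  ∃ x0 ∈ Icc (0 : ℝ) 1, ∃ x1 ∈ Icc (0 : ℝ) 1,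
    projSl b1 b2 b3 a b (l0.pt x0) = projSl b1 b2 b3 a b (l1.pt x1)

open Classical in
lemma Seg.tauSl_toR_eq_ite (b1 b2 b3 : R3) (a b : ℝ) (l0 l1 : Seg) :
    tauSl b1 b2 b3 a b l0.toR l1.toR =
      if SlantedProjMeet b1 b2 b3 a b l0.toR l1.toR ∧
          dot (cubeCenter l0.a) b3 < dot (cubeCenter l1.a) b3
      then det3 l1.toR.v l0.toR.v b3 else 0 := by
  rw [← Seg.toR_pt_zero, ← Seg.toR_pt_zero]
  rfl

lemma projSl_zero_zero (b1 b2 u : R3) : projSl b1 b2 u 0 0 = projO u := by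
  ext x i
  simp [projSl, projO]

lemma tauR_eq_tauSl_zero (b1 b2 u : R3) (l0 l1 : RSeg) :
    tauR u l0 l1 = 1 / 4 * tauSl b1 b2 u 0 0 l0 l1 := by
  rw [tauR, tauSl, projSl_zero_zero]
  split_ifs <;> simp

lemma slantedProjMeet_comm (b1 b2 b3 : R3) (a b : ℝ) (l0 l1 : RSeg) :
    SlantedProjMeet b1 b2 b3 a b l0 l1 ↔ SlantedProjMeet b2 b1 b3 b a l0 l1 := by
  have : projSl b1 b2 b3 a b = projSl b2 b1 b3 b a := by
    ext x i
    simp only [projSl, add_right_comm]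
  rw [SlantedProjMeet, SlantedProjMeet, this]

lemma exists_image_Icc_zero_one_eq_Icc_int (c : ℤ) {ρ : ℤ} (hρ : IsUnit ρ) :
    ∃ n : ℤ, (fun x : ℝ => c + x * ρ) '' Icc 0 1 = Icc (n : ℝ) (n + 1) := by
  rcases Int.isUnit_iff.1 hρ with rfl | rfl
  · refine ⟨c, ?_⟩
    simp only [Int.cast_one, mul_one, image_const_add_Icc, add_zero]
  · refine ⟨c - 1, ?_⟩
    simp only [Int.cast_neg, Int.cast_one, mul_neg_one, ← sub_eq_add_neg, image_const_sub_Icc,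
      sub_zero, Int.cast_sub, sub_add_cancel]

lemma slantedProjMeet_iff_of_vec_eq_single {k1 k2 k3 : Fin 3} (h12 : k1 ≠ k2) (h13 : k1 ≠ k3)
    (h23 : k2 ≠ k3) {s1 s2 s3 : ℤ} (hs1 : IsUnit s1) (hs2 : IsUnit s2) (hs3 : IsUnit s3)
    {l0 l1 : Seg} {σ0 σ1 : ℤ} (hσ0 : IsUnit σ0) (hσ1 : IsUnit σ1)
    (hv0 : l0.vec = Pi.single k1 (σ0 : ℝ)) (hv1 : l1.vec = Pi.single k2 (σ1 : ℝ)) :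
    ∃ n1 n2 : ℤ, ∀ a b : ℝ,
      SlantedProjMeet (Pi.single k1 (s1 : ℝ)) (Pi.single k2 (s2 : ℝ)) (Pi.single k3 (s3 : ℝ))
          a b l0.toR l1.toR ↔
        a * ((l1.a k3 - l0.a k3) * s3 : ℤ) ∈ Icc (n1 : ℝ) (n1 + 1) ∧
          b * ((l1.a k3 - l0.a k3) * s3 : ℤ) ∈ Icc (n2 : ℝ) (n2 + 1) := by
  have hsq {s : ℤ} (hs : IsUnit s) : (s : ℝ) * s = 1 := by exact_mod_cast Int.isUnit_mul_self hs
  obtain ⟨n1, hn1⟩ :=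
    exists_image_Icc_zero_one_eq_Icc_int ((l1.a k1 - l0.a k1) * s1) (hσ0.neg.mul hs1)
  obtain ⟨n2, hn2⟩ :=
    exists_image_Icc_zero_one_eq_Icc_int ((l1.a k2 - l0.a k2) * s2) (hσ1.mul hs2)
  refine ⟨n1, n2, fun a b => ?_⟩
  rw [← hn1, ← hn2, SlantedProjMeet]
  simp only [projSl_single_eq_iff h12 h13 h23 (hsq hs1) (hsq hs2) (hsq hs3), Seg.toR_pt, hv0, hv1,
    mem_image, mem_Icc, ne_eq, h12, not_false_eq_true, Pi.single_eq_of_ne, mul_zero, add_zero,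
    Pi.single_eq_same, h23.symm, h13.symm, add_sub_add_right_eq_sub, Pi.single_eq_of_ne',
    Int.cast_mul, Int.cast_sub, neg_mul, Int.cast_neg, mul_neg]
  constructor
  · rintro ⟨x0, hx0, x1, hx1, e1, e2⟩
    exact ⟨⟨x0, hx0, by linarith⟩, x1, hx1, by linarith⟩
  · rintro ⟨⟨x0, hx0, e1⟩, x1, hx1, e2⟩
    exact ⟨x0, hx0, x1, hx1, by linarith, by linarith⟩

lemma exists_slantedProjMeet_iff {k1 k2 k3 : Fin 3} (h12 : k1 ≠ k2) (h13 : k1 ≠ k3)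
    (h23 : k2 ≠ k3) {s1 s2 s3 : ℤ} (hs1 : IsUnit s1) (hs2 : IsUnit s2) (hs3 : IsUnit s3)
    (l0 l1 : Seg) (hD : det3 l1.toR.v l0.toR.v (Pi.single k3 (s3 : ℝ)) ≠ 0) :
    ∃ n1 n2 : ℤ, ∀ a b : ℝ,
      SlantedProjMeet (Pi.single k1 (s1 : ℝ)) (Pi.single k2 (s2 : ℝ)) (Pi.single k3 (s3 : ℝ))
          a b l0.toR l1.toR ↔
        a * ((l1.a k3 - l0.a k3) * s3 : ℤ) ∈ Icc (n1 : ℝ) (n1 + 1) ∧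
          b * ((l1.a k3 - l0.a k3) * s3 : ℤ) ∈ Icc (n2 : ℝ) (n2 + 1) := by
  obtain ⟨m0, σ0, hσ0, hv0⟩ := l0.exists_vec_eq_single
  obtain ⟨m1, σ1, hσ1, hv1⟩ := l1.exists_vec_eq_single
  have hm : ¬(m1 = m0 ∨ m1 = k3 ∨ m0 = k3) := fun h =>
    hD (by rw [Seg.toR, Seg.toR, hv0, hv1]; exact det3_single_eq_zero h _ _ _)
  simp only [not_or] at hm
  obtain ⟨h10, h1k, h0k⟩ := hm
  rcases Fin.three_cases_of_ne h12 h13 h23 m0 with rfl | rfl | rfl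
  · obtain rfl : m1 = k2 := by
      rcases Fin.three_cases_of_ne h12 h13 h23 m1 with h | h | h
      exacts [absurd h h10, h, absurd h h1k]
    exact slantedProjMeet_iff_of_vec_eq_single h12 h13 h23 hs1 hs2 hs3 hσ0 hσ1 hv0 hv1
  · obtain rfl : m1 = k1 := by
      rcases Fin.three_cases_of_ne h12 h13 h23 m1 with h | h | h
      exacts [h, absurd h h10, absurd h h1k]
    obtain ⟨n2, n1, h⟩ :=
      slantedProjMeet_iff_of_vec_eq_single h12.symm h23 h13 hs2 hs1 hs3 hσ0 hσ1 hv0 hv1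
    exact ⟨n1, n2, fun a b => (slantedProjMeet_comm ..).trans ((h b a).trans and_comm)⟩
  · exact absurd rfl h0k

lemma zero_mem_Icc_int_iff {δ : ℝ} (hδ0 : 0 < δ) (hδ1 : δ < 1) (n : ℤ) :
    (0 : ℝ) ∈ Icc (n : ℝ) (n + 1) ↔ δ ∈ Icc (n : ℝ) (n + 1) ∨ -δ ∈ Icc (n : ℝ) (n + 1) := by
  simp only [mem_Icc]
  constructor
  · rintro ⟨h0, h1⟩
    have : n ≤ 0 := by exact_mod_cast h0
    have : -1 ≤ n := by exact_mod_cast (by linarith : (-1 : ℝ) ≤ n)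
    obtain rfl | rfl : n = 0 ∨ n = -1 := by omega
    · left; push_cast; constructor <;> linarith
    · right; push_cast; constructor <;> linarith
  · rintro (⟨h0, h1⟩ | ⟨h0, h1⟩)
    · have : n < 1 := by exact_mod_cast h0.trans_lt hδ1
      have : (n : ℝ) ≤ 0 := by exact_mod_cast (by omega : n ≤ 0)
      constructor <;> linarith
    · have : -2 < n := by exact_mod_cast (by linarith : (-2 : ℝ) < n)
      have : (0 : ℝ) ≤ n + 1 := by exact_mod_cast (by omega : 0 ≤ n + 1)
      constructor <;> linarith

lemma not_and_neg_mem_Icc_int {δ : ℝ} (hδ0 : 0 < δ) (n : ℤ) :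
    ¬(δ ∈ Icc (n : ℝ) (n + 1) ∧ -δ ∈ Icc (n : ℝ) (n + 1)) := by
  rintro ⟨⟨-, h1⟩, h2, -⟩
  have : n < 0 := by exact_mod_cast (by linarith : (n : ℝ) < 0)
  have : (n : ℝ) + 1 ≤ 0 := by exact_mod_cast (by omega : n + 1 ≤ 0)
  linarith

lemma ite_and_eq_add_of_iff_or {A Ap Am B Bp Bm : Prop} [Decidable (A ∧ B)]
    [Decidable (Ap ∧ Bp)] [Decidable (Ap ∧ Bm)] [Decidable (Am ∧ Bp)] [Decidable (Am ∧ Bm)]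
    (hA : A ↔ Ap ∨ Am) (hA' : ¬(Ap ∧ Am)) (hB : B ↔ Bp ∨ Bm) (hB' : ¬(Bp ∧ Bm)) (x : ℝ) :
    (if A ∧ B then x else 0) = (if Ap ∧ Bp then x else 0) + (if Ap ∧ Bm then x else 0) +
      (if Am ∧ Bp then x else 0) + (if Am ∧ Bm then x else 0) := by
  by_cases ap : Ap <;> by_cases am : Am <;> by_cases bp : Bp <;> by_cases bm : Bm <;>
    simp_all

theorem statement7 (b1 b2 b3 : R3) (hβ : IsLatticeBasis b1 b2 b3)
    (R : Finset (Fin 3 → ℤ)) (N : ℝ)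
    (hN : ∀ p ∈ R, ∀ q ∈ R, |dot (cubeCenter p) b3 - dot (cubeCenter q) b3| ≤ N)
    (ε : ℝ) (hε : 0 < ε) (hε' : ε < 1/N)
    (l0 l1 : Seg) (h0 : l0.inRegion R) (h1 : l1.inRegion R) :
    tauR b3 l0.toR l1.toR = (1/4) *
      (tauSl b1 b2 b3 ε ε l0.toR l1.toR + tauSl b1 b2 b3 ε (-ε) l0.toR l1.toR +
       tauSl b1 b2 b3 (-ε) ε l0.toR l1.toR + tauSl b1 b2 b3 (-ε) (-ε) l0.toR l1.toR) := by
  obtain ⟨k1, k2, k3, h12, h13, h23, s1, s2, s3, hs1, hs2, hs3, rfl, rfl, rfl⟩ :=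
    hβ.exists_eq_single
  rw [tauR_eq_tauSl_zero (Pi.single k1 (s1 : ℝ)) (Pi.single k2 (s2 : ℝ))]
  simp only [Seg.tauSl_toR_eq_ite]
  by_cases hlt : dot (cubeCenter l0.a) (Pi.single k3 (s3 : ℝ)) <
    dot (cubeCenter l1.a) (Pi.single k3 (s3 : ℝ))
  swap
  · simp [hlt]
  by_cases hD : det3 l1.toR.v l0.toR.v (Pi.single k3 (s3 : ℝ)) = 0
  · simp [hD]
  obtain ⟨n1, n2, hmeet⟩ := exists_slantedProjMeet_iff h12 h13 h23 hs1 hs2 hs3 l0 l1 hD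
  have hheight := dot_cubeCenter_sub_dot_cubeCenter l1.a l0.a k3 s3
  set h : ℤ := (l1.a k3 - l0.a k3) * s3
  have hpos : (0 : ℝ) < h := hheight ▸ sub_pos.2 hlt
  have hhN : (h : ℝ) ≤ N := hheight ▸ (le_abs_self _).trans (hN l1.a h1.1 l0.a h0.1)
  have hδ0 : 0 < ε * h := mul_pos hε hpos
  have hδ1 : ε * h < 1 :=
    calc ε * h ≤ ε * N := by gcongr
      _ < 1 := by rwa [lt_div_iff₀ (hpos.trans_le hhN)] at hε'
  simp only [hmeet, hlt, and_true, zero_mul, neg_mul]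
  rw [ite_and_eq_add_of_iff_or (zero_mem_Icc_int_iff hδ0 hδ1 n1) (not_and_neg_mem_Icc_int hδ0 n1)
    (zero_mem_Icc_int_iff hδ0 hδ1 n2) (not_and_neg_mem_Icc_int hδ0 n2)]
end
end

section
/- Let ℓ0 and ℓ1 be two segments of a region and u ∈ R^3 with ‖u‖ < 1. Then there exist s0,s1 ∈ [0,1] with ℓ0(s0) − ℓ1(s1) = u if and only if there exist (i,j) ∈ {0,1}^2 and a0,a1 ∈ (−1,1) such that ℓ0(i) = ℓ1(j), u = a0·v(ℓ0) + a1·v(ℓ1), (−1)^i a0 ≥ 0 and (−1)^j a1 ≤ 0. -/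
open scoped BigOperators
noncomputable section

/-! Writing `ℓ0(s0) - ℓ1(s1) = (ℓ0(i) - ℓ1(j)) + (s0 - i) • v(ℓ0) + (j - s1) • v(ℓ1)`, it suffices to
move the parameters to endpoints `i, j ∈ {0, 1}` with `|s0 - i|, |s1 - j| < 1` and `ℓ0(i) = ℓ1(j)`;
the sign conditions then only say `s0, s1 ∈ [0, 1]`. In the sup norm this works one parameter at a
time: `v(ℓ)` is a unit coordinate vector, so moving a parameter changes a single coordinate, which
is affine in it, and some endpoint keeps that coordinate in `(-1, 1)`. Finally `ℓ0(i) - ℓ1(j)` is an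
integer vector of sup norm `< 1`, hence zero. -/

open Set

lemma exists_nat_le_one_abs_add_mul_lt_one {y e s : ℝ} (he : |e| ≤ 1) (hs : s ∈ Icc (0 : ℝ) 1)
    (h : |y + s * e| < 1) : ∃ i : ℕ, i ≤ 1 ∧ |s - i| < 1 ∧ |y + i * e| < 1 := by
  rcases hs.1.eq_or_lt with rfl | hs0
  · exact ⟨0, zero_le_one, by simp, by simpa using h⟩
  rcases hs.2.eq_or_lt with rfl | hs1
  · exact ⟨1, le_rfl, by simp, by simpa using h⟩
  by_cases hy : |y| < 1
  · exact ⟨0, zero_le_one, by rw [Nat.cast_zero, sub_zero, abs_lt]; constructor <;> linarith,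
      by simpa using hy⟩
  refine ⟨1, le_rfl, by rw [Nat.cast_one, abs_lt]; constructor <;> linarith, ?_⟩
  -- `y + s * e` is a convex combination of `y` and `y + e`, which differ by at most `1`.
  by_contra hye
  rw [not_lt, Nat.cast_one, one_mul, le_abs'] at hye
  rw [not_lt, le_abs'] at hy
  rw [abs_lt] at h
  rw [abs_le] at he
  rcases hy with hy | hy <;> rcases hye with hye | hye <;>
    nlinarith [mul_pos hs0 (sub_pos.2 hs1)]

lemma exists_nat_le_one_norm_add_smul_lt_one {ι : Type*} [Fintype ι] {p v : ι → ℝ} {k : ι}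
    (hv : ∀ c ≠ k, v c = 0) (hvk : |v k| ≤ 1) {s : ℝ} (hs : s ∈ Icc (0 : ℝ) 1)
    (h : ‖p + s • v‖ < 1) : ∃ i : ℕ, i ≤ 1 ∧ |s - i| < 1 ∧ ‖p + (i : ℝ) • v‖ < 1 := by
  have hcoord := (pi_norm_lt_iff one_pos).1 h
  obtain ⟨i, hi, hsi, hki⟩ :=
    exists_nat_le_one_abs_add_mul_lt_one hvk hs (by simpa using hcoord k)
  refine ⟨i, hi, hsi, (pi_norm_lt_iff one_pos).2 fun c => ?_⟩
  by_cases hc : c = k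
  · subst hc
    simpa using hki
  · simpa [hv c hc] using hcoord c

lemma norm_le_sqrt_dot (u : R3) : ‖u‖ ≤ √(dot u u) :=
  (pi_norm_le_iff_of_nonneg (Real.sqrt_nonneg _)).2 fun c => by
    rw [Real.norm_eq_abs]
    exact Real.abs_le_sqrt (by
      simpa [sq, dot] using Finset.single_le_sum (f := fun i => u i * u i)
        (fun i _ => mul_self_nonneg _) (Finset.mem_univ c))

lemma nat_add_mem_Icc_iff {i : ℕ} (hi : i ≤ 1) {a : ℝ} (ha : a ∈ Ioo (-1 : ℝ) 1) :
    (i : ℝ) + a ∈ Icc (0 : ℝ) 1 ↔ 0 ≤ (-1 : ℝ) ^ i * a := by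
  obtain ⟨ha1, ha2⟩ := ha
  interval_cases i <;> simp only [Nat.cast_zero, Nat.cast_one, pow_zero, pow_one, mem_Icc] <;>
    exact ⟨fun h => by linarith [h.1, h.2], fun h => ⟨by linarith, by linarith⟩⟩

namespace Seg

lemma exists_axis (s : Seg) : ∃ k, (∀ c ≠ k, s.vec c = 0) ∧ |s.vec k| = 1 := by
  have h := s.adj
  rw [Fin.sum_univ_three] at h
  obtain ⟨k, hk, hb⟩ : ∃ k : Fin 3, (∀ c ≠ k, s.b c = s.a c) ∧ |s.b k - s.a k| = 1 := by
    rcases (by simp only [abs_eq_max_neg] at h ⊢; omega :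
        (|s.b 0 - s.a 0| = 1 ∧ s.b 1 = s.a 1 ∧ s.b 2 = s.a 2) ∨
        (s.b 0 = s.a 0 ∧ |s.b 1 - s.a 1| = 1 ∧ s.b 2 = s.a 2) ∨
        (s.b 0 = s.a 0 ∧ s.b 1 = s.a 1 ∧ |s.b 2 - s.a 2| = 1)) with h | h | h
    · exact ⟨0, fun c hc => by fin_cases c <;> simp_all, h.1⟩
    · exact ⟨1, fun c hc => by fin_cases c <;> simp_all, h.2.1⟩
    · exact ⟨2, fun c hc => by fin_cases c <;> simp_all, h.2.2⟩
  refine ⟨k, fun c hc => by simp [Seg.vec, hk c hc], ?_⟩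
  rw [Seg.vec, ← Int.cast_sub, ← Int.cast_abs, hb, Int.cast_one]

lemma pt_eq_add_smul (l : Seg) (x : ℝ) : l.pt x = l.pt 0 + x • l.vec := by
  funext c
  simp [Seg.pt, Seg.vec]

lemma pt_eq_of_norm_sub_lt_one (l0 l1 : Seg) (i j : ℕ) (h : ‖l0.pt i - l1.pt j‖ < 1) :
    l0.pt i = l1.pt j := by
  funext c
  set z : ℤ := l0.a c + i * (l0.b c - l0.a c) - (l1.a c + j * (l1.b c - l1.a c))
  have hz : (l0.pt i - l1.pt j) c = z := by
    simp only [z, Pi.sub_apply, Seg.pt, cubeCenter]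
    push_cast
    ring
  have hz0 : z = 0 := by
    have := (pi_norm_lt_iff one_pos).1 h c
    rw [hz, Real.norm_eq_abs, ← Int.cast_abs, ← Int.cast_one, Int.cast_lt] at this
    exact Int.abs_lt_one_iff.1 this
  rw [← sub_eq_zero, ← Pi.sub_apply, hz, hz0, Int.cast_zero]

lemma pt_sub_pt_eq_of_pt_eq {l0 l1 : Seg} {y0 y1 : ℝ} (h : l0.pt y0 = l1.pt y1) (x0 x1 : ℝ) :
    l0.pt x0 - l1.pt x1 = (x0 - y0) • l0.vec + (y1 - x1) • l1.vec := by
  rw [l0.pt_eq_add_smul x0, l1.pt_eq_add_smul x1]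
  rw [l0.pt_eq_add_smul y0, l1.pt_eq_add_smul y1, ← eq_sub_iff_add_eq] at h
  rw [h]
  module

lemma exists_pt_eq_of_norm_lt_one {l0 l1 : Seg} {s0 s1 : ℝ} (hs0 : s0 ∈ Icc (0 : ℝ) 1)
    (hs1 : s1 ∈ Icc (0 : ℝ) 1) (h : ‖l0.pt s0 - l1.pt s1‖ < 1) :
    ∃ i j : ℕ, i ≤ 1 ∧ j ≤ 1 ∧ |s0 - i| < 1 ∧ |s1 - j| < 1 ∧ l0.pt i = l1.pt j := by
  obtain ⟨k0, hv0, hk0⟩ := l0.exists_axis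
  obtain ⟨k1, hv1, hk1⟩ := l1.exists_axis
  rw [show l0.pt s0 - l1.pt s1 = l0.pt 0 - l1.pt s1 + s0 • l0.vec by
    rw [l0.pt_eq_add_smul s0]; abel] at h
  obtain ⟨i, hi, hsi, hi_lt⟩ := exists_nat_le_one_norm_add_smul_lt_one hv0 hk0.le hs0 h
  rw [show l0.pt 0 - l1.pt s1 + (i : ℝ) • l0.vec = l0.pt i - l1.pt 0 + s1 • -l1.vec by
    rw [l0.pt_eq_add_smul i, l1.pt_eq_add_smul s1]; module] at hi_lt
  obtain ⟨j, hj, hsj, hij_lt⟩ := exists_nat_le_one_norm_add_smul_lt_one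
    (fun c hc => by simp [hv1 c hc]) (by rw [Pi.neg_apply, abs_neg, hk1]) hs1 hi_lt
  rw [show l0.pt i - l1.pt 0 + (j : ℝ) • -l1.vec = l0.pt i - l1.pt j by
    rw [l1.pt_eq_add_smul j]; module] at hij_lt
  exact ⟨i, j, hi, hj, hsi, hsj, pt_eq_of_norm_sub_lt_one l0 l1 i j hij_lt⟩

end Seg

theorem statement8_general (l0 l1 : Seg) (u : R3) (hu : Real.sqrt (dot u u) < 1) :
    (∃ s0 ∈ Set.Icc (0:ℝ) 1, ∃ s1 ∈ Set.Icc (0:ℝ) 1, l0.pt s0 - l1.pt s1 = u) ↔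
    (∃ i j : ℕ, i ≤ 1 ∧ j ≤ 1 ∧ ∃ a0 a1 : ℝ,
      a0 ∈ Set.Ioo (-1:ℝ) 1 ∧ a1 ∈ Set.Ioo (-1:ℝ) 1 ∧
      l0.pt i = l1.pt j ∧ u = a0 • l0.vec + a1 • l1.vec ∧
      0 ≤ (-1:ℝ)^i * a0 ∧ (-1:ℝ)^j * a1 ≤ 0) := by
  constructor
  · rintro ⟨s0, hs0, s1, hs1, rfl⟩
    obtain ⟨i, j, hi, hj, hsi, hsj, hij⟩ :=
      Seg.exists_pt_eq_of_norm_lt_one hs0 hs1 ((norm_le_sqrt_dot _).trans_lt hu)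
    have ha0 : s0 - i ∈ Ioo (-1 : ℝ) 1 := abs_lt.1 hsi
    have ha1 : s1 - j ∈ Ioo (-1 : ℝ) 1 := abs_lt.1 hsj
    have hsgn1 := (nat_add_mem_Icc_iff hj ha1).1 (by rwa [add_sub_cancel])
    refine ⟨i, j, hi, hj, s0 - i, j - s1, ha0, ⟨by linarith [ha1.2], by linarith [ha1.1]⟩, hij,
      Seg.pt_sub_pt_eq_of_pt_eq hij s0 s1, (nat_add_mem_Icc_iff hi ha0).1 (by rwa [add_sub_cancel]),
      by linarith [hsgn1, show (-1 : ℝ) ^ j * (j - s1) = -((-1) ^ j * (s1 - j)) by ring]⟩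
  · rintro ⟨i, j, hi, hj, a0, a1, ha0, ha1, hij, rfl, hsgn0, hsgn1⟩
    have ha1' : -a1 ∈ Ioo (-1 : ℝ) 1 := ⟨by linarith [ha1.2], by linarith [ha1.1]⟩
    refine ⟨i + a0, (nat_add_mem_Icc_iff hi ha0).2 hsgn0,
      j + -a1, (nat_add_mem_Icc_iff hj ha1').2 (by rw [mul_neg]; exact neg_nonneg.2 hsgn1), ?_⟩
    rw [Seg.pt_sub_pt_eq_of_pt_eq hij, add_sub_cancel_left, sub_add_cancel_left, neg_neg]

theorem statement8 (R : Finset (Fin 3 → ℤ)) (l0 l1 : Seg)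
    (h0 : l0.inRegion R) (h1 : l1.inRegion R) (u : R3) (hu : Real.sqrt (dot u u) < 1) :
    (∃ s0 ∈ Set.Icc (0:ℝ) 1, ∃ s1 ∈ Set.Icc (0:ℝ) 1, l0.pt s0 - l1.pt s1 = u) ↔
    (∃ i j : ℕ, i ≤ 1 ∧ j ≤ 1 ∧ ∃ a0 a1 : ℝ,
      a0 ∈ Set.Ioo (-1:ℝ) 1 ∧ a1 ∈ Set.Ioo (-1:ℝ) 1 ∧
      l0.pt i = l1.pt j ∧ u = a0 • l0.vec + a1 • l1.vec ∧
      0 ≤ (-1:ℝ)^i * a0 ∧ (-1:ℝ)^j * a1 ≤ 0) :=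
  statement8_general l0 l1 u hu
end
end

section
/- A balanced bicolored finite tree (one with equally many black and white vertices) with at least one edge has at least one white leaf and at least one black leaf. -/
open scoped BigOperators
noncomputable section

/-! Each edge of a properly 2-coloured graph has exactly one end of each colour, so the degrees
within one colour class add up to the number of edges, which for a tree is `|V| - 1`. If every
vertex of a class with at least `|V| / 2` vertices had degree `≥ 2`, this sum would be `≥ |V|`. -/

open Finset

namespace SimpleGraph

variable {V : Type*} [Fintype V] {G : SimpleGraph V}

theorem isBipartiteWith_filter_true_filter_false {c : V → Bool}
    (hc : ∀ u v, G.Adj u v → c u ≠ c v) :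
    G.IsBipartiteWith ↑(univ.filter (c · = true)) ↑(univ.filter (c · = false)) where
  disjoint := by
    rw [disjoint_coe]
    exact disjoint_filter.2 fun v _ h => by simp [h]
  mem_of_adj u v huv := by
    have := hc u v huv
    cases hu : c u <;> cases hv : c v <;> simp_all

theorem IsTree.exists_degree_le_one_of_isBipartiteWith [DecidableRel G.Adj] {s t : Finset V}
    (hG : G.IsTree) (hst : G.IsBipartiteWith s t) (hs : Fintype.card V ≤ 2 * #s) :
    ∃ v ∈ s, G.degree v ≤ 1 := by
  by_contra! hdeg
  have hsum : 2 * #s ≤ #G.edgeFinset := by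
    rw [← isBipartiteWith_sum_degrees_eq_card_edges hst, mul_comm, ← smul_eq_mul]
    exact card_nsmul_le_sum s _ 2 hdeg
  have := hG.card_edgeFinset
  omega

end SimpleGraph

theorem statement11_general {V : Type} [Fintype V]
    (G : SimpleGraph V) [DecidableRel G.Adj] (hT : G.IsTree)
    (c : V → Bool) (hproper : ∀ u v, G.Adj u v → c u ≠ c v)
    (hbal : (Finset.univ.filter (fun v => c v = true)).card
          = (Finset.univ.filter (fun v => c v = false)).card) :
    (∃ v, G.degree v ≤ 1 ∧ c v = true) ∧ (∃ v, G.degree v ≤ 1 ∧ c v = false) := by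
  have hbip := SimpleGraph.isBipartiteWith_filter_true_filter_false hproper
  have hcard : #(univ.filter (c · = true)) + #(univ.filter (c · = false)) = Fintype.card V := by
    simpa using card_filter_add_card_filter_not (s := univ) (fun v => c v = true)
  obtain ⟨v, hv, hvdeg⟩ := hT.exists_degree_le_one_of_isBipartiteWith hbip (by omega)
  obtain ⟨w, hw, hwdeg⟩ := hT.exists_degree_le_one_of_isBipartiteWith hbip.symm (by omega)
  exact ⟨⟨v, hvdeg, by simpa using hv⟩, ⟨w, hwdeg, by simpa using hw⟩⟩

theorem statement11 {V : Type} [Fintype V] [DecidableEq V]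
    (G : SimpleGraph V) [DecidableRel G.Adj] (hT : G.IsTree)
    (c : V → Bool) (hproper : ∀ u v, G.Adj u v → c u ≠ c v)
    (hbal : (Finset.univ.filter (fun v => c v = true)).card
          = (Finset.univ.filter (fun v => c v = false)).card)
    (hedge : ∃ u v, G.Adj u v) :
    (∃ v, G.degree v ≤ 1 ∧ c v = true) ∧ (∃ v, G.degree v ≤ 1 ∧ c v = false) :=
  statement11_general G hT c hproper hbal
end
end
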